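/- arXiv:0706.0192 — 3 statements merged into one kernel-verified Lean document; each statement's English description precedes it below -/
import Mathlib

section
/- Let $P \subset \mathbb{R}^d$ be a compact convex polytope with vertices $a_1,\dots,a_n$ and nonempty interior. For each $x$ in the interior $P^o$, there exists a unique tuple $(p_1(x),\dots,p_n(x))$ of positive numbers with $\sum_i p_i(x) = 1$, $\sum_i p_i(x) a_i = x$, and $\sum_i \ln p_i(x) = U(x)$, where $U(x)$ is the supremum of $\sum_i \ln p_i$ over all such positive representations. -/
open Finset

/-- The entropy function of a polytope with vertices `a 1, …, a n`:
`U(x) = sup { ∑ᵢ ln pᵢ : pᵢ > 0, ∑ pᵢ = 1, ∑ pᵢ aᵢ = x }`. -/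
noncomputable def entropyU {d n : ℕ} (a : Fin n → EuclideanSpace ℝ (Fin d))
    (x : EuclideanSpace ℝ (Fin d)) : ℝ :=
  sSup {s | ∃ p : Fin n → ℝ, (∀ i, 0 < p i) ∧ ∑ i, p i = 1 ∧
    ∑ i, p i • a i = x ∧ s = ∑ i, Real.log (p i)}

/-!
If `x` is interior and `c` is the centroid of the vertices, then `y = x + t (x - c)` still lies in
the hull for small `t > 0`, and `x = (y + t c) / (1 + t)`; mixing barycentric weights of `y` with
the uniform weights of `c` gives weights of `x` that are all positive.

Since `∑ log pᵢ = log ∏ pᵢ` on positive weights, one maximizes the continuous function `∏ pᵢ` over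
the compact set of nonnegative barycentric weights of `x`. Its maximum is at least the (positive)
product of any positive weights, so the maximizer has positive entries and maximizes `∑ log pᵢ`.
It is unique because the set of positive weights is convex and `∑ log pᵢ` is strictly concave.
-/

open Filter Topology

theorem convexHull_range_eq_image_stdSimplex {R E ι : Type*} [Field R] [LinearOrder R]
    [IsStrictOrderedRing R] [AddCommGroup E] [Module R E] [Fintype ι] (a : ι → E) :
    convexHull R (Set.range a) = Fintype.linearCombination R a '' stdSimplex R ι := by
  classical
  rw [← convexHull_rangle_single_eq_stdSimplex, LinearMap.image_convexHull, ← Set.range_comp]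
  congr 1
  ext i
  simp [Fintype.linearCombination_apply_single]

section

variable {ι E : Type*} [Fintype ι] [AddCommGroup E] [Module ℝ E]

theorem exists_pos_add_smul_sub_mem_of_mem_interior [TopologicalSpace E] [IsTopologicalAddGroup E]
    [ContinuousSMul ℝ E] {s : Set E} {x : E} (hx : x ∈ interior s) (c : E) :
    ∃ t : ℝ, 0 < t ∧ x + t • (x - c) ∈ s := by
  have hcont : Tendsto (fun t : ℝ => x + t • (x - c)) (𝓝[>] 0) (𝓝 x) := by
    have : Continuous fun t : ℝ => x + t • (x - c) := by fun_prop
    simpa using (this.tendsto 0).mono_left nhdsWithin_le_nhds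
  obtain ⟨t, hts, ht⟩ :=
    ((hcont.eventually (isOpen_interior.mem_nhds hx)).and self_mem_nhdsWithin).exists
  exact ⟨t, ht, interior_subset hts⟩

def positiveWeights (a : ι → E) (x : E) : Set (ι → ℝ) :=
  {p | (∀ i, 0 < p i) ∧ ∑ i, p i = 1 ∧ ∑ i, p i • a i = x}

theorem convex_positiveWeights (a : ι → E) (x : E) : Convex ℝ (positiveWeights a x) := by
  rintro p ⟨hp0, hp1, hpx⟩ q ⟨hq0, hq1, hqx⟩ s t hs ht hst
  refine ⟨fun i => convex_Ioi (0 : ℝ) (hp0 i) (hq0 i) hs ht hst, ?_, ?_⟩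
  · simp [sum_add_distrib, ← mul_sum, hp1, hq1, hst]
  · simp only [Pi.add_apply, Pi.smul_apply, smul_eq_mul, add_smul, mul_smul]
    rw [sum_add_distrib, ← smul_sum, ← smul_sum, hpx, hqx, ← add_smul, hst, one_smul]

theorem positiveWeights_nonempty_of_mem_interior [TopologicalSpace E] [IsTopologicalAddGroup E]
    [ContinuousSMul ℝ E] {a : ι → E} {x : E} (hx : x ∈ interior (convexHull ℝ (Set.range a))) :
    (positiveWeights a x).Nonempty := by
  have : Nonempty ι :=
    Set.range_nonempty_iff_nonempty.mp (convexHull_nonempty_iff.mp ⟨x, interior_subset hx⟩)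
  set u : ι → ℝ := fun _ => (Fintype.card ι : ℝ)⁻¹
  obtain ⟨t, ht, hy⟩ :=
    exists_pos_add_smul_sub_mem_of_mem_interior hx (Fintype.linearCombination ℝ a u)
  rw [convexHull_range_eq_image_stdSimplex] at hy
  obtain ⟨w, ⟨hw0, hw1⟩, hwy⟩ := hy
  refine ⟨(1 + t)⁻¹ • (w + t • u), fun i => ?_, ?_, ?_⟩
  · have := hw0 i
    simp only [Pi.smul_apply, Pi.add_apply, smul_eq_mul, u]
    positivity
  · simp [sum_add_distrib, ← mul_sum, hw1, u]
    field_simp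
  · rw [← Fintype.linearCombination_apply, map_smul, map_add, map_smul, hwy]
    have hsum : x + t • (x - Fintype.linearCombination ℝ a u) + t • Fintype.linearCombination ℝ a u
        = (1 + t) • x := by
      rw [add_smul, one_smul, smul_sub]; abel
    rw [hsum, smul_smul, inv_mul_cancel₀ (by positivity), one_smul]

theorem StrictConcaveOn.sum_comp_apply {s : Set ℝ} {f : ℝ → ℝ} (hf : StrictConcaveOn ℝ s f) :
    StrictConcaveOn ℝ (Set.univ.pi fun _ : ι => s) (fun p => ∑ i, f (p i)) := by
  refine ⟨convex_pi fun _ _ => hf.1, fun p hp q hq hpq s t hs ht hst => ?_⟩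
  obtain ⟨j, hj⟩ := Function.ne_iff.mp hpq
  simp only [smul_eq_mul, mul_sum, ← sum_add_distrib, Pi.add_apply, Pi.smul_apply]
  refine sum_lt_sum (fun i _ => ?_) ⟨j, mem_univ j, ?_⟩
  · exact hf.concaveOn.2 (hp i trivial) (hq i trivial) hs.le ht.le hst
  · exact hf.2 (hp j trivial) (hq j trivial) hj hs ht hst

theorem strictConcaveOn_sum_log_positiveWeights (a : ι → E) (x : E) :
    StrictConcaveOn ℝ (positiveWeights a x) (fun p => ∑ i, Real.log (p i)) :=
  strictConcaveOn_log_Ioi.sum_comp_apply.subset (fun _ hp i _ => hp.1 i)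
    (convex_positiveWeights a x)

theorem exists_isMaxOn_sum_log_positiveWeights [TopologicalSpace E] [IsTopologicalAddGroup E]
    [ContinuousSMul ℝ E] [T1Space E] {a : ι → E} {x : E} (h : (positiveWeights a x).Nonempty) :
    ∃ p ∈ positiveWeights a x, IsMaxOn (fun p => ∑ i, Real.log (p i)) (positiveWeights a x) p := by
  obtain ⟨q, hq⟩ := h
  set K := stdSimplex ℝ ι ∩ Fintype.linearCombination ℝ a ⁻¹' {x}
  have hK : IsCompact K := (isCompact_stdSimplex ℝ ι).inter_right <|
    isClosed_singleton.preimage (Fintype.linearCombination ℝ a).continuous_on_pi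
  have hsub : positiveWeights a x ⊆ K := fun p ⟨hp0, hp1, hpx⟩ =>
    ⟨⟨fun i => (hp0 i).le, hp1⟩, by simp [Fintype.linearCombination_apply, hpx]⟩
  have hprod_cont : Continuous fun p : ι → ℝ => ∏ i, p i :=
    continuous_finsetProd _ fun i _ => continuous_apply i
  obtain ⟨m, ⟨⟨hm0, hm1⟩, hmx⟩, hmax⟩ := hK.exists_isMaxOn ⟨q, hsub hq⟩ hprod_cont.continuousOn
  have hprod_pos : 0 < ∏ i, m i :=
    (prod_pos fun i _ => hq.1 i).trans_le (hmax (hsub hq))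
  have hm_pos : ∀ i, 0 < m i := fun i =>
    (hm0 i).lt_of_ne fun h => hprod_pos.ne' (prod_eq_zero (mem_univ i) h.symm)
  refine ⟨m, ⟨hm_pos, hm1, by simpa [Fintype.linearCombination_apply] using hmx⟩, fun p hp => ?_⟩
  have hp_pos := hp.1
  show ∑ i, Real.log (p i) ≤ ∑ i, Real.log (m i)
  rw [← Real.log_prod fun i _ => (hp_pos i).ne', ← Real.log_prod fun i _ => (hm_pos i).ne']
  exact Real.log_le_log (prod_pos fun i _ => hp_pos i) (hmax (hsub hp))

end

theorem stmt_6_general {d n : ℕ} (a : Fin n → EuclideanSpace ℝ (Fin d))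
    (P : Set (EuclideanSpace ℝ (Fin d)))
    (hP : P = convexHull ℝ (Set.range a)) :
    ∀ x ∈ interior P, ∃! p : Fin n → ℝ,
      (∀ i, 0 < p i) ∧ ∑ i, p i = 1 ∧ ∑ i, p i • a i = x ∧
      ∑ i, Real.log (p i) = entropyU a x := by
  intro x hx
  subst hP
  obtain ⟨m, hm, hmax⟩ :=
    exists_isMaxOn_sum_log_positiveWeights (positiveWeights_nonempty_of_mem_interior hx)
  have hU : entropyU a x = ∑ i, Real.log (m i) := by
    refine IsGreatest.csSup_eq ⟨⟨m, hm.1, hm.2.1, hm.2.2, rfl⟩, ?_⟩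
    rintro _ ⟨p, hp0, hp1, hpx, rfl⟩
    exact hmax ⟨hp0, hp1, hpx⟩
  refine ⟨m, ⟨hm.1, hm.2.1, hm.2.2, hU.symm⟩, fun p ⟨hp0, hp1, hpx, hpU⟩ => ?_⟩
  have hp_max : IsMaxOn (fun p => ∑ i, Real.log (p i)) (positiveWeights a x) p := fun q hq => by
    show ∑ i, Real.log (q i) ≤ ∑ i, Real.log (p i)
    rw [hpU, hU]
    exact hmax hq
  exact (strictConcaveOn_sum_log_positiveWeights a x).eq_of_isMaxOn hp_max hmax
    ⟨hp0, hp1, hpx⟩ hm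

/-- For each interior point `x` there is a unique positive tuple `p` with
`∑ pᵢ = 1`, `∑ pᵢ aᵢ = x` achieving the entropy supremum `U(x)`. -/
theorem stmt_6 {d n : ℕ} (hn : 2 ≤ n) (a : Fin n → EuclideanSpace ℝ (Fin d))
    (ha : Function.Injective a)
    (P : Set (EuclideanSpace ℝ (Fin d)))
    (hP : P = convexHull ℝ (Set.range a))
    (hvert : ∀ i, a i ∈ Set.extremePoints ℝ P)
    (hint : (interior P).Nonempty) :
    ∀ x ∈ interior P, ∃! p : Fin n → ℝ,
      (∀ i, 0 < p i) ∧ ∑ i, p i = 1 ∧ ∑ i, p i • a i = x ∧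
      ∑ i, Real.log (p i) = entropyU a x :=
  stmt_6_general a P hP
end

section
/- With the entropy-maximizing weights $p_k(x)$ on the interior of a polytope with vertices $a_1,\dots,a_n$, for every $x \in P^o$ and every $k$ one has $1/p_k(x) = n - (x - a_k, \nabla U(x))$, where $U$ is the entropy function. -/
/-!
The maximiser `p = p(x)` yields minorants of `U` touching it at `x`: for every perturbation `c`
with `∑ cᵢ = 0` and `p + c > 0`, the weights `p + c` represent `x + ∑ cᵢ aᵢ`, so
`∑ log (pᵢ + cᵢ) ≤ U (x + ∑ cᵢ aᵢ)`, with equality at `c = 0`. Since the vertices affinely span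
the space, `c` can be chosen linear in the displacement, which gives a smooth minorant at `x`;
reflecting it through `x` and using midpoint concavity of `U` gives a matching majorant, so `U` is
differentiable at `x`. Along the segment `c = t (p - eₖ)`, which moves `x` in the direction
`x - aₖ`, the two derivatives at `t = 0` agree: `∇U(x) · (x - aₖ) = ∑ᵢ (pᵢ - δᵢₖ) / pᵢ = n - 1/pₖ`.
-/

open Finset

open Filter Topology

theorem exists_linearMap_sum_eq_zero_and_sum_smul_eq {ι E : Type*} [Fintype ι] [AddCommGroup E]
    [Module ℝ E] {a : ι → E} (hspan : affineSpan ℝ (Set.range a) = ⊤) :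
    ∃ q : E →ₗ[ℝ] ι → ℝ, ∀ v, ∑ i, q v i = 0 ∧ ∑ i, q v i • a i = v := by
  classical
  obtain ⟨-, i₀, rfl⟩ : (Set.range a).Nonempty := by
    rw [← affineSpan_nonempty ℝ, hspan, AffineSubspace.top_coe]
    exact Set.univ_nonempty
  have hsurj : (Fintype.linearCombination ℝ fun i => a i - a i₀).range = ⊤ := by
    have := vectorSpan_range_eq_span_range_vsub_right ℝ a i₀
    simp only [vsub_eq_sub] at this
    rw [Fintype.range_linearCombination, ← this, ← direction_affineSpan, hspan,
      AffineSubspace.direction_top]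
  obtain ⟨R, hR⟩ := LinearMap.exists_rightInverse_of_surjective _ hsurj
  -- subtracting `(∑ᵢ R v i) • e_{i₀}` from `R v` makes the coefficients sum to zero
  -- without changing `∑ᵢ (R v i) • (aᵢ - a_{i₀})`
  refine ⟨R - LinearMap.smulRight ((∑ i, LinearMap.proj i) ∘ₗ R) (Pi.single i₀ 1),
    fun v => ⟨?_, ?_⟩⟩
  · simp [Pi.single_apply]
  · have := LinearMap.congr_fun hR v
    simp only [LinearMap.comp_apply, Fintype.linearCombination_apply, smul_sub, sum_sub_distrib,
      ← sum_smul, LinearMap.id_apply] at this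
    simp [sub_smul, sum_sub_distrib, Pi.single_apply, this]

theorem hasFDerivAt_of_minorant_of_midpoint_concave {E : Type*} [NormedAddCommGroup E]
    [NormedSpace ℝ E] {f g : E → ℝ} {g' : E →L[ℝ] ℝ} {x : E} (hg : HasFDerivAt g g' x)
    (hgf : ∀ᶠ v in 𝓝 0, g (x + v) ≤ f (x + v)) (hfx : f x = g x)
    (hmid : ∀ᶠ v in 𝓝 0, f (x + v) + f (x - v) ≤ 2 * f x) : HasFDerivAt f g' x := by
  rw [hasFDerivAt_iff_isLittleO_nhds_zero] at hg ⊢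
  have hneg : Tendsto (fun v : E => -v) (𝓝 0) (𝓝 0) := by
    simpa using (continuous_neg.tendsto (0 : E))
  have hg_neg : (fun v => g (x - v) - g x + g' v) =o[𝓝 0] fun v => v := by
    refine Asymptotics.isLittleO_neg_right.1 ((hg.comp_tendsto hneg).congr_left fun v => ?_)
    simp [sub_eq_add_neg]
  have hgf_neg : ∀ᶠ v in 𝓝 0, g (x - v) ≤ f (x - v) := by
    simpa [sub_eq_add_neg] using hneg.eventually hgf
  refine Asymptotics.IsBigO.trans_isLittleO ?_ (hg.norm_left.add hg_neg.norm_left)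
  refine Asymptotics.IsBigO.of_bound' ?_
  -- midpoint concavity turns the minorant at `x - v` into a majorant at `x + v`
  filter_upwards [hgf, hgf_neg, hmid] with v h₁ h₂ h₃
  simp only [Real.norm_eq_abs]
  rw [abs_of_nonneg (by positivity : 0 ≤ |g (x + v) - g x - g' v| + |g (x - v) - g x + g' v|)]
  refine abs_le.2 ⟨?_, ?_⟩
  · linarith [neg_abs_le (g (x + v) - g x - g' v), abs_nonneg (g (x - v) - g x + g' v)]
  · linarith [neg_abs_le (g (x - v) - g x + g' v), abs_nonneg (g (x + v) - g x - g' v)]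

theorem HasFDerivAt.apply_eq_of_minorant {E : Type*} [NormedAddCommGroup E] [NormedSpace ℝ E]
    {f : E → ℝ} {f' : E →L[ℝ] ℝ} {x w : E} {φ : ℝ → ℝ} {φ' : ℝ} (hf : HasFDerivAt f f' x)
    (hφ : HasDerivAt φ φ' 0) (hle : ∀ᶠ t in 𝓝 0, φ t ≤ f (x + t • w)) (h0 : φ 0 = f x) :
    f' w = φ' := by
  have hline : HasDerivAt (fun t : ℝ => f (x + t • w)) (f' w) 0 := by
    have := ((hasDerivAt_id (0 : ℝ)).smul_const w).const_add x
    simp only [id, one_smul] at this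
    exact hf.comp_hasDerivAt_of_eq (0 : ℝ) this (by simp)
  have hmin : IsLocalMin (fun t => f (x + t • w) - φ t) 0 := by
    filter_upwards [hle] with t ht
    simp only [zero_smul, add_zero, h0, sub_self]
    linarith
  exact sub_eq_zero.1 (hmin.hasDerivAt_eq_zero (hline.sub hφ))

section Weights

variable {ι E : Type*} [Fintype ι] [AddCommGroup E] [Module ℝ E]

def IsPosWeights (a : ι → E) (y : E) (r : ι → ℝ) : Prop :=
  (∀ i, 0 < r i) ∧ ∑ i, r i = 1 ∧ ∑ i, r i • a i = y

variable {a : ι → E} {y v : E} {r s c : ι → ℝ}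

theorem IsPosWeights.add_of_sum_eq_zero (hr : IsPosWeights a y r) (hc : ∑ i, c i = 0)
    (hpos : ∀ i, 0 < r i + c i) : IsPosWeights a (y + ∑ i, c i • a i) (r + c) := by
  refine ⟨hpos, ?_, ?_⟩
  · simp [sum_add_distrib, hr.2.1, hc]
  · simp [add_smul, sum_add_distrib, hr.2.2]

theorem IsPosWeights.midpoint (hr : IsPosWeights a (y + v) r) (hs : IsPosWeights a (y - v) s) :
    IsPosWeights a y fun i => (r i + s i) / 2 := by
  refine ⟨fun i => by linarith [hr.1 i, hs.1 i], ?_, ?_⟩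
  · rw [← sum_div, sum_add_distrib, hr.2.1, hs.2.1]
    norm_num
  · simp only [div_eq_inv_mul, mul_smul, ← smul_sum, add_smul, sum_add_distrib, hr.2.2, hs.2.2]
    module

theorem IsPosWeights.sum_log_nonpos (hr : IsPosWeights a y r) : ∑ i, Real.log (r i) ≤ 0 :=
  sum_nonpos fun i _ => Real.log_nonpos (hr.1 i).le <|
    hr.2.1 ▸ single_le_sum (fun j _ => (hr.1 j).le) (mem_univ i)

end Weights

section Entropy

variable {d n : ℕ} {a : Fin n → EuclideanSpace ℝ (Fin d)} {x y v : EuclideanSpace ℝ (Fin d)}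
  {p r s : Fin n → ℝ}

theorem sum_log_le_entropyU (hr : IsPosWeights a y r) : ∑ i, Real.log (r i) ≤ entropyU a y :=
  le_csSup
    ⟨0, by rintro _ ⟨r, h₁, h₂, h₃, rfl⟩; exact IsPosWeights.sum_log_nonpos ⟨h₁, h₂, h₃⟩⟩
    ⟨r, hr.1, hr.2.1, hr.2.2, rfl⟩

theorem entropyU_le {b : ℝ} (hne : ∃ r, IsPosWeights a y r)
    (h : ∀ r, IsPosWeights a y r → ∑ i, Real.log (r i) ≤ b) : entropyU a y ≤ b := by
  obtain ⟨r, hr⟩ := hne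
  exact csSup_le ⟨_, r, hr.1, hr.2.1, hr.2.2, rfl⟩
    fun _ ⟨r, h₁, h₂, h₃, hs⟩ => hs ▸ h r ⟨h₁, h₂, h₃⟩

theorem entropyU_add_add_entropyU_sub_le (hr : IsPosWeights a (y + v) r)
    (hs : IsPosWeights a (y - v) s) :
    entropyU a (y + v) + entropyU a (y - v) ≤ 2 * entropyU a y := by
  suffices ∀ r s, IsPosWeights a (y + v) r → IsPosWeights a (y - v) s →
      ∑ i, Real.log (r i) + ∑ i, Real.log (s i) ≤ 2 * entropyU a y by
    have := entropyU_le ⟨r, hr⟩ fun r hr =>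
      le_sub_comm.1 <| entropyU_le ⟨s, hs⟩ fun s hs => le_sub_iff_add_le'.2 <| this r s hr hs
    linarith
  intro r s hr hs
  calc ∑ i, Real.log (r i) + ∑ i, Real.log (s i)
      ≤ 2 * ∑ i, Real.log ((r i + s i) / 2) := by
        rw [← sum_add_distrib, mul_sum]
        refine sum_le_sum fun i _ => ?_
        have := strictConcaveOn_log_Ioi.concaveOn.2 (hr.1 i) (hs.1 i)
          (by norm_num : (0 : ℝ) ≤ 1 / 2) (by norm_num : (0 : ℝ) ≤ 1 / 2) (by norm_num)
        simp only [smul_eq_mul] at this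
        rw [show (r i + s i) / 2 = 1 / 2 * r i + 1 / 2 * s i by ring]
        linarith
    _ ≤ 2 * entropyU a y := by linarith [sum_log_le_entropyU (hr.midpoint hs)]

theorem differentiableAt_entropyU (hspan : affineSpan ℝ (Set.range a) = ⊤)
    (hp : IsPosWeights a x p) (hmax : ∑ i, Real.log (p i) = entropyU a x) :
    DifferentiableAt ℝ (entropyU a) x := by
  obtain ⟨q₀, hq⟩ := exists_linearMap_sum_eq_zero_and_sum_smul_eq hspan
  set q := LinearMap.toContinuousLinearMap q₀
  have hq' : ∀ v, ∑ i, q v i = 0 ∧ ∑ i, q v i • a i = v := hq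
  have hfeas : ∀ v, (∀ i, |q v i| < p i) → IsPosWeights a (x + v) (p + q v) := fun v hv => by
    simpa [(hq' v).2] using
      hp.add_of_sum_eq_zero (hq' v).1 fun i => by linarith [neg_abs_le (q v i), hv i]
  have hsmall : ∀ᶠ v in 𝓝 0, ∀ i, |q v i| < p i := eventually_all.2 fun i =>
    ContinuousAt.eventually_lt (by fun_prop) continuousAt_const (by simpa using hp.1 i)
  have hg : DifferentiableAt ℝ (fun y => ∑ i, Real.log (p i + q (y - x) i)) x := by
    fun_prop (disch := simp [(hp.1 _).ne'])
  refine (hasFDerivAt_of_minorant_of_midpoint_concave hg.hasFDerivAt ?_ (by simp [hmax])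
    ?_).differentiableAt
  · filter_upwards [hsmall] with v hv
    simpa using sum_log_le_entropyU (hfeas v hv)
  · filter_upwards [hsmall] with v hv
    refine entropyU_add_add_entropyU_sub_le (hfeas v hv) (s := p + q (-v)) ?_
    simpa [sub_eq_add_neg] using hfeas (-v) (by simpa using hv)

theorem fderiv_entropyU_sub_vertex (hp : IsPosWeights a x p)
    (hmax : ∑ i, Real.log (p i) = entropyU a x) (hdiff : DifferentiableAt ℝ (entropyU a) x)
    (k : Fin n) : fderiv ℝ (entropyU a) x (x - a k) = n - 1 / p k := by
  set D : Fin n → ℝ := p - Pi.single k 1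
  have hD_sum : ∑ i, D i = 0 := by simp [D, hp.2.1]
  have hD_smul : ∑ i, D i • a i = x - a k := by simp [D, sub_smul, hp.2.2]
  have hD_div : ∑ i, D i / p i = n - 1 / p k := by
    simp [D, sub_div, (hp.1 _).ne', Pi.single_apply, ite_div]
  have hφ : HasDerivAt (fun t : ℝ => ∑ i, Real.log (p i + t * D i)) (∑ i, D i / p i) 0 := by
    refine HasDerivAt.fun_sum fun i _ => ?_
    simpa using (((hasDerivAt_id (0 : ℝ)).mul_const (D i)).const_add (p i)).log
      (by simp [(hp.1 i).ne'])
  have hpos : ∀ᶠ t in 𝓝 (0 : ℝ), ∀ i, 0 < p i + t * D i := eventually_all.2 fun i =>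
    continuousAt_const.eventually_lt (by fun_prop) (by simpa using hp.1 i)
  rw [← hD_div]
  refine hdiff.hasFDerivAt.apply_eq_of_minorant hφ ?_ (by simp [hmax])
  filter_upwards [hpos] with t ht
  have := sum_log_le_entropyU
    (hp.add_of_sum_eq_zero (c := t • D) (by simp [← mul_sum, hD_sum]) ht)
  simpa [mul_smul, ← smul_sum, hD_smul] using this

end Entropy

theorem stmt_9_general {d n : ℕ} (a : Fin n → EuclideanSpace ℝ (Fin d))
    (P : Set (EuclideanSpace ℝ (Fin d)))
    (hP : P = convexHull ℝ (Set.range a))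
    (p : EuclideanSpace ℝ (Fin d) → Fin n → ℝ)
    (hp : ∀ x ∈ interior P, (∀ i, 0 < p x i) ∧ ∑ i, p x i = 1 ∧
      ∑ i, p x i • a i = x ∧ ∑ i, Real.log (p x i) = entropyU a x) :
    ∀ x ∈ interior P, ∀ k,
      1 / p x k = (n : ℝ) - fderiv ℝ (entropyU a) x (x - a k) := by
  intro x hx k
  obtain ⟨hpos, hsum, hrep, hmax⟩ := hp x hx
  have hw : IsPosWeights a x (p x) := ⟨hpos, hsum, hrep⟩
  have hspan : affineSpan ℝ (Set.range a) = ⊤ := by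
    rw [← affineSpan_convexHull, ← (convex_convexHull ℝ _).interior_nonempty_iff_affineSpan_eq_top,
      ← hP]
    exact ⟨x, hx⟩
  rw [fderiv_entropyU_sub_vertex hw hmax (differentiableAt_entropyU hspan hw hmax)]
  ring

/-- For every interior point `x` and every `k`,
`1/pₖ(x) = n - U_{(x - aₖ)}(x)`. -/
theorem stmt_9 {d n : ℕ} (hn : 2 ≤ n) (a : Fin n → EuclideanSpace ℝ (Fin d))
    (ha : Function.Injective a)
    (P : Set (EuclideanSpace ℝ (Fin d)))
    (hP : P = convexHull ℝ (Set.range a))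
    (hvert : ∀ i, a i ∈ Set.extremePoints ℝ P)
    (hint : (interior P).Nonempty)
    (p : EuclideanSpace ℝ (Fin d) → Fin n → ℝ)
    (hp : ∀ x ∈ interior P, (∀ i, 0 < p x i) ∧ ∑ i, p x i = 1 ∧
      ∑ i, p x i • a i = x ∧ ∑ i, Real.log (p x i) = entropyU a x) :
    ∀ x ∈ interior P, ∀ k,
      1 / p x k = (n : ℝ) - fderiv ℝ (entropyU a) x (x - a k) :=
  stmt_9_general a P hP p hp
end

section
/- Let $p_1(x),\dots,p_n(x)$ be the entropy-maximizing barycentric weights at an interior point $x$ of a polytope with vertices $a_1,\dots,a_n$. If $x = \sum_k q_k a_k$ is any affine representation with $\sum_k q_k = 1$ (coefficients $q_k$ real, not necessarily nonnegative), then $\sum_k q_k / p_k(x) = n$. -/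
open Finset

/-
At the maximizer `p = p(x)`, moving along `p + t (q - p)` keeps the constraints `∑ pₖ = 1`,
`∑ pₖ aₖ = x` and, for small `t`, positivity; so `t ↦ ∑ₖ ln (pₖ + t (qₖ - pₖ))` has a local
maximum at `0`. Its derivative there, `∑ₖ (qₖ - pₖ) / pₖ = ∑ₖ qₖ / pₖ - n`, must vanish.
-/

theorem hasDerivAt_sum_log_add_mul {ι : Type*} [Fintype ι] (p c : ι → ℝ) (hp : ∀ i, p i ≠ 0) :
    HasDerivAt (fun t : ℝ => ∑ i, Real.log (p i + t * c i)) (∑ i, c i / p i) 0 := by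
  have h := HasDerivAt.fun_sum (u := univ) fun i _ =>
    (((hasDerivAt_id (0 : ℝ)).mul_const (c i)).const_add (p i)).log (by simpa using hp i)
  simpa using h

section Entropy

variable {d n : ℕ} (a : Fin n → EuclideanSpace ℝ (Fin d)) (x : EuclideanSpace ℝ (Fin d))

theorem bddAbove_entropyU_set :
    BddAbove {s | ∃ p : Fin n → ℝ, (∀ i, 0 < p i) ∧ ∑ i, p i = 1 ∧
      ∑ i, p i • a i = x ∧ s = ∑ i, Real.log (p i)} := by
  refine ⟨0, ?_⟩
  rintro s ⟨p, hpos, hsum, -, rfl⟩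
  refine sum_nonpos fun i _ => Real.log_nonpos (hpos i).le ?_
  exact hsum ▸ single_le_sum (fun j _ => (hpos j).le) (mem_univ i)

theorem sum_log_le_entropyU_s10 {p : Fin n → ℝ} (hpos : ∀ i, 0 < p i) (hsum : ∑ i, p i = 1)
    (hrep : ∑ i, p i • a i = x) : ∑ i, Real.log (p i) ≤ entropyU a x :=
  le_csSup (bddAbove_entropyU_set a x) ⟨p, hpos, hsum, hrep, rfl⟩

variable {a x}

theorem isLocalMax_sum_log_add_mul_of_entropyU {p c : Fin n → ℝ} (hpos : ∀ i, 0 < p i)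
    (hsum : ∑ i, p i = 1) (hrep : ∑ i, p i • a i = x)
    (hU : ∑ i, Real.log (p i) = entropyU a x)
    (hcsum : ∑ i, c i = 0) (hcrep : ∑ i, c i • a i = 0) :
    IsLocalMax (fun t : ℝ => ∑ i, Real.log (p i + t * c i)) 0 := by
  have hpos_near : ∀ᶠ t in nhds (0 : ℝ), ∀ i, 0 < p i + t * c i :=
    Filter.eventually_all.2 fun i =>
      (continuous_const.add (continuous_id.mul continuous_const)).continuousAt.eventually
        (eventually_gt_nhds (by simpa using hpos i))
  filter_upwards [hpos_near] with t ht
  simp only [zero_mul, add_zero, hU]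
  refine sum_log_le_entropyU_s10 a x ht ?_ ?_
  · rw [sum_add_distrib, hsum, ← mul_sum, hcsum, mul_zero, add_zero]
  · simp only [add_smul, mul_smul, sum_add_distrib, ← smul_sum, hcrep, smul_zero, add_zero, hrep]

theorem sum_div_eq_zero_of_entropyU {p c : Fin n → ℝ} (hpos : ∀ i, 0 < p i)
    (hsum : ∑ i, p i = 1) (hrep : ∑ i, p i • a i = x)
    (hU : ∑ i, Real.log (p i) = entropyU a x)
    (hcsum : ∑ i, c i = 0) (hcrep : ∑ i, c i • a i = 0) :
    ∑ i, c i / p i = 0 :=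
  (isLocalMax_sum_log_add_mul_of_entropyU hpos hsum hrep hU hcsum hcrep).hasDerivAt_eq_zero
    (hasDerivAt_sum_log_add_mul p c fun i => (hpos i).ne')

end Entropy

theorem stmt_10_general {d n : ℕ} (a : Fin n → EuclideanSpace ℝ (Fin d))
    (P : Set (EuclideanSpace ℝ (Fin d)))
    (p : EuclideanSpace ℝ (Fin d) → Fin n → ℝ)
    (hp : ∀ x ∈ interior P, (∀ i, 0 < p x i) ∧ ∑ i, p x i = 1 ∧
      ∑ i, p x i • a i = x ∧ ∑ i, Real.log (p x i) = entropyU a x) :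
    ∀ x ∈ interior P, ∀ q : Fin n → ℝ,
      ∑ k, q k = 1 → x = ∑ k, q k • a k →
      ∑ k, q k / p x k = (n : ℝ) := by
  intro x hx q hq hxq
  obtain ⟨hpos, hsum, hrep, hU⟩ := hp x hx
  have hcrit : ∑ k, (q k - p x k) / p x k = 0 :=
    sum_div_eq_zero_of_entropyU hpos hsum hrep hU
      (by rw [sum_sub_distrib, hq, hsum, sub_self])
      (by simp only [sub_smul, sum_sub_distrib, hrep, ← hxq, sub_self])
  calc ∑ k, q k / p x k = ∑ k, ((q k - p x k) / p x k + 1) :=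
        sum_congr rfl fun k _ => by field_simp [(hpos k).ne']; ring
    _ = n := by rw [sum_add_distrib, hcrit]; simp

/-- If `x = ∑ₖ qₖ aₖ` with `∑ₖ qₖ = 1` (real coefficients), then
`∑ₖ qₖ / pₖ(x) = n`. -/
theorem stmt_10 {d n : ℕ} (hn : 2 ≤ n) (a : Fin n → EuclideanSpace ℝ (Fin d))
    (ha : Function.Injective a)
    (P : Set (EuclideanSpace ℝ (Fin d)))
    (hP : P = convexHull ℝ (Set.range a))
    (hvert : ∀ i, a i ∈ Set.extremePoints ℝ P)
    (hint : (interior P).Nonempty)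
    (p : EuclideanSpace ℝ (Fin d) → Fin n → ℝ)
    (hp : ∀ x ∈ interior P, (∀ i, 0 < p x i) ∧ ∑ i, p x i = 1 ∧
      ∑ i, p x i • a i = x ∧ ∑ i, Real.log (p x i) = entropyU a x) :
    ∀ x ∈ interior P, ∀ q : Fin n → ℝ,
      ∑ k, q k = 1 → x = ∑ k, q k • a k →
      ∑ k, q k / p x k = (n : ℝ) :=
  stmt_10_general a P p hp
end
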